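/- Let K ≥ 8. Then the supremum of 2K g₁ + K g₃ over all (g₁,g₂,g₃) ∈ ℝ³ such that the (1+2K)×(1+2K) matrix G(g₁,g₂,g₃) = [[1, g₁𝟙_Kᵀ, g₁𝟙_Kᵀ],[g₁𝟙_K, I_K + g₂(J_K − I_K), g₃ I_K],[g₁𝟙_K, g₃ I_K, I_K + g₂(J_K − I_K)]] is positive semidefinite equals K²/(K−2) + (K−2)/2. (Hence the level-1 NPA value of the no-cloning game equals 5/8 + 1/(2(K−2)) − 1/(4K) for K > 7, which tends to 5/8 as K → ∞.) -/

import Mathlib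

open Matrix

/-- The `K × K` all-ones matrix. -/
def allOnes (K : ℕ) : Matrix (Fin K) (Fin K) ℝ := Matrix.of fun _ _ => 1

/-- The symmetry-reduced level-1 NPA Gram matrix
`G(g₁,g₂,g₃) = [[1, g₁𝟙ᵀ, g₁𝟙ᵀ],[g₁𝟙, I + g₂(J−I), g₃I],[g₁𝟙, g₃I, I + g₂(J−I)]]`. -/
def npaGram (K : ℕ) (g₁ g₂ g₃ : ℝ) :
    Matrix (Unit ⊕ (Fin K ⊕ Fin K)) (Unit ⊕ (Fin K ⊕ Fin K)) ℝ :=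
  Matrix.fromBlocks
    (Matrix.of fun _ _ => 1)
    (Matrix.of fun _ _ => g₁)
    (Matrix.of fun _ _ => g₁)
    (Matrix.fromBlocks
      (1 + g₂ • (allOnes K - 1)) (g₃ • (1 : Matrix (Fin K) (Fin K) ℝ))
      (g₃ • (1 : Matrix (Fin K) (Fin K) ℝ)) (1 + g₂ • (allOnes K - 1)))

/-!
Testing `G` against `(-2Kg₁, 𝟙, 𝟙)` and `(0, eᵢ - eⱼ, eⱼ - eᵢ)` gives `2Kg₁² ≤ 1 + (K-1)g₂ + g₃`
and `g₂ + g₃ ≤ 1`, hence `(K-2)g₃ ≤ K - 2Kg₁²`; the objective is then bounded by a concave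
quadratic in `g₁`, maximised at `g₁ = (K-2)/(2K)`.

Conversely, for `g₂ = 1 - g₃` the Cauchy–Schwarz bound `(∑ (yᵢ + zᵢ))² ≤ K ∑ (yᵢ + zᵢ)²` writes
`K` times the quadratic form of `G` as a sum of nonnegative terms as soon as `0 ≤ g₃ ≤ 1` and
`2Kg₁² ≤ K - (K-2)g₃`. The optimal `g₃ = K/(K-2) - (K-2)/(2K)` satisfies `g₃ ≤ 1` iff
`K² - 8K + 4 ≥ 0`, which is where `K ≥ 8` enters.
-/

lemma of_const_mulVec {m n : Type*} [Fintype n] (c : ℝ) (y : n → ℝ) :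
    (Matrix.of fun (_ : m) (_ : n) => c) *ᵥ y = fun _ => c * ∑ j, y j := by
  ext i; simp [Matrix.mulVec, dotProduct, Finset.mul_sum]

lemma allOnes_mulVec (K : ℕ) (y : Fin K → ℝ) :
    allOnes K *ᵥ y = fun _ => ∑ j, y j := by
  ext i; simp [allOnes, Matrix.mulVec, dotProduct]

lemma npaGram_isHermitian (K : ℕ) (g₁ g₂ g₃ : ℝ) : (npaGram K g₁ g₂ g₃).IsHermitian := by
  ext (i | i | i) (j | j | j) <;>
    simp [npaGram, Matrix.conjTranspose_apply, allOnes, Matrix.one_apply, eq_comm]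

lemma sumElim_dotProduct_npaGram_mulVec (K : ℕ) (g₁ g₂ g₃ t : ℝ) (y z : Fin K → ℝ) :
    Sum.elim (fun _ => t) (Sum.elim y z) ⬝ᵥ
        (npaGram K g₁ g₂ g₃ *ᵥ Sum.elim (fun _ => t) (Sum.elim y z))
      = t ^ 2 + 2 * g₁ * t * (∑ i, y i + ∑ i, z i) + ∑ i, y i ^ 2 + ∑ i, z i ^ 2
        + g₂ * ((∑ i, y i) ^ 2 - ∑ i, y i ^ 2 + ((∑ i, z i) ^ 2 - ∑ i, z i ^ 2))
        + 2 * g₃ * ∑ i, y i * z i := by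
  simp only [npaGram, fromBlocks_mulVec, Sum.elim_comp_inl, Sum.elim_comp_inr,
    sumElim_dotProduct_sumElim, of_const_mulVec, allOnes_mulVec, add_mulVec, one_mulVec,
    smul_mulVec, sub_mulVec]
  simp only [dotProduct, Fintype.sum_sum_type, Sum.elim_inl, Sum.elim_inr, Pi.add_apply,
    Pi.smul_apply, Pi.sub_apply, smul_eq_mul, Finset.univ_unique, Finset.sum_singleton]
  simp only [sq, mul_add, mul_sub, mul_left_comm _ g₁, mul_left_comm _ g₂, mul_left_comm _ g₃,
    mul_comm (z _) (y _), Finset.sum_add_distrib, Finset.sum_sub_distrib, ← Finset.mul_sum,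
    ← Finset.sum_mul]
  ring

lemma npaGram_posSemidef_of_sq_le {K : ℕ} (hK : 0 < K) {g₁ g₃ : ℝ} (hg₃ : 0 ≤ g₃)
    (hg₃' : g₃ ≤ 1) (hg₁ : 2 * K * g₁ ^ 2 ≤ K - (K - 2) * g₃) :
    (npaGram K g₁ (1 - g₃) g₃).PosSemidef := by
  refine .of_dotProduct_mulVec_nonneg (npaGram_isHermitian K _ _ _) fun x => ?_
  obtain ⟨t, y, z, rfl⟩ : ∃ t y z, x = Sum.elim (fun _ => t) (Sum.elim y z) :=
    ⟨x (.inl ()), fun i => x (.inr (.inl i)), fun i => x (.inr (.inr i)),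
      by ext (_ | _ | _) <;> rfl⟩
  rw [star_trivial, sumElim_dotProduct_npaGram_mulVec]
  have hCS : (∑ i, y i + ∑ i, z i) ^ 2
      ≤ K * (∑ i, y i ^ 2 + 2 * ∑ i, y i * z i + ∑ i, z i ^ 2) := by
    simpa [← Finset.sum_add_distrib, add_sq, Finset.mul_sum, mul_assoc] using
      sq_sum_le_card_mul_sum_sq (s := Finset.univ) (f := fun i => y i + z i)
  generalize ∑ i, y i = Sy, ∑ i, z i = Sz, ∑ i, y i ^ 2 = A, ∑ i, z i ^ 2 = B,
    ∑ i, y i * z i = C at hCS ⊢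
  have hK' : (0 : ℝ) < K := by exact_mod_cast hK
  refine nonneg_of_mul_nonneg_right (a := (K : ℝ)) ?_ hK'
  have hSOS : K * (t ^ 2 + 2 * g₁ * t * (Sy + Sz) + A + B
      + (1 - g₃) * (Sy ^ 2 - A + (Sz ^ 2 - B)) + 2 * g₃ * C)
      = K * (t + g₁ * (Sy + Sz)) ^ 2 + g₃ * (K * (A + 2 * C + B) - (Sy + Sz) ^ 2)
        + K * (1 - g₃) / 2 * (Sy - Sz) ^ 2
        + (K - (K - 2) * g₃ - 2 * K * g₁ ^ 2) / 2 * (Sy + Sz) ^ 2 := by ring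
  rw [hSOS]
  positivity

lemma npaGram_sq_le_of_posSemidef {K : ℕ} (hK : 0 < K) {g₁ g₂ g₃ : ℝ}
    (h : (npaGram K g₁ g₂ g₃).PosSemidef) : 2 * K * g₁ ^ 2 ≤ 1 + (K - 1) * g₂ + g₃ := by
  have hx := h.dotProduct_mulVec_nonneg (Sum.elim (fun _ => -2 * K * g₁) (Sum.elim 1 1))
  rw [star_trivial, sumElim_dotProduct_npaGram_mulVec] at hx
  simp only [Pi.one_apply, Finset.sum_const, Finset.card_univ, Fintype.card_fin,
    nsmul_eq_mul, mul_one, one_pow] at hx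
  have hK' : (0 : ℝ) < K := by exact_mod_cast hK
  nlinarith

lemma npaGram_add_le_one_of_posSemidef {K : ℕ} {i j : Fin K} (hij : i ≠ j) {g₁ g₂ g₃ : ℝ}
    (h : (npaGram K g₁ g₂ g₃).PosSemidef) : g₂ + g₃ ≤ 1 := by
  set w : Fin K → ℝ := Pi.single i 1 - Pi.single j 1
  have hx := h.dotProduct_mulVec_nonneg (Sum.elim (fun _ => 0) (Sum.elim w (-w)))
  rw [star_trivial, sumElim_dotProduct_npaGram_mulVec] at hx
  have hw : ∑ k, w k = 0 := by simp [w, Finset.sum_sub_distrib]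
  have hw2 : ∑ k, w k ^ 2 = 2 := by
    simp [w, Pi.single_apply, sub_sq, Finset.sum_add_distrib, hij.symm]
    norm_num
  simp only [Pi.neg_apply, neg_sq, mul_neg, ← sq, Finset.sum_neg_distrib, hw, hw2] at hx
  linarith

lemma npaGram_objective_le {K : ℕ} (hK : 2 < K) {g₁ g₂ g₃ : ℝ}
    (h : (npaGram K g₁ g₂ g₃).PosSemidef) :
    2 * K * g₁ + K * g₃ ≤ K ^ 2 / (K - 2) + (K - 2) / 2 := by
  have hsq := npaGram_sq_le_of_posSemidef (by omega) h
  have hsum := npaGram_add_le_one_of_posSemidef (i := ⟨0, by omega⟩) (j := ⟨1, by omega⟩)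
    (by simp) h
  have hK' : (2 : ℝ) < K := by exact_mod_cast hK
  have hg₃ : (K - 2) * g₃ ≤ K - 2 * K * g₁ ^ 2 := by nlinarith
  rw [div_add_div _ _ (by linarith) two_ne_zero, le_div_iff₀ (by linarith)]
  nlinarith [sq_nonneg (2 * K * g₁ - (K - 2))]

lemma npaGram_objective_attained {K : ℕ} (hK : 8 ≤ K) :
    ∃ g₁ g₂ g₃ : ℝ, (npaGram K g₁ g₂ g₃).PosSemidef ∧
      K ^ 2 / (K - 2) + (K - 2) / 2 = 2 * K * g₁ + K * g₃ := by
  have hK' : (8 : ℝ) ≤ K := by exact_mod_cast hK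
  set g₁ : ℝ := (K - 2) / (2 * K)
  set g₃ : ℝ := K / (K - 2) - (K - 2) / (2 * K)
  have hK₂ : (K : ℝ) - 2 ≠ 0 := by linarith
  have hg₃_eq : g₃ = (K ^ 2 + 4 * K - 4) / (2 * K * (K - 2)) := by
    simp only [g₃]; field_simp; ring
  have hg₃ : 0 ≤ g₃ := by
    rw [hg₃_eq]; apply div_nonneg <;> nlinarith
  have hg₃' : g₃ ≤ 1 := by
    rw [hg₃_eq, div_le_one (by nlinarith)]; nlinarith
  have hg₁ : 2 * K * g₁ ^ 2 = K - (K - 2) * g₃ := by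
    simp only [g₁, g₃]; field_simp; ring
  refine ⟨g₁, 1 - g₃, g₃, npaGram_posSemidef_of_sq_le (by omega) hg₃ hg₃' hg₁.le, ?_⟩
  simp only [g₁, g₃]; field_simp; ring

/-- **Statement 17.** For `K ≥ 8`, the supremum of `2K g₁ + K g₃` over all
`(g₁,g₂,g₃) ∈ ℝ³` with `G(g₁,g₂,g₃)` positive semidefinite equals `K²/(K−2) + (K−2)/2`;
hence the level-1 NPA value of the Clifford no-cloning game equals
`5/8 + 1/(2(K−2)) − 1/(4K)` for `K > 7`, tending to `5/8` as `K → ∞`. -/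
theorem stmt18 (K : ℕ) (hK : 8 ≤ K) :
    sSup {x : ℝ | ∃ g₁ g₂ g₃ : ℝ, (npaGram K g₁ g₂ g₃).PosSemidef ∧
        x = 2 * K * g₁ + K * g₃}
      = K ^ 2 / (K - 2) + (K - 2) / 2 := by
  refine IsGreatest.csSup_eq ⟨npaGram_objective_attained hK, ?_⟩
  rintro x ⟨g₁, g₂, g₃, hpsd, rfl⟩
  exact npaGram_objective_le (by omega) hpsd
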